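/- arXiv:2505.05179 — 2 statements merged into one kernel-verified Lean document; each statement's English description precedes it below -/
import Mathlib

section
/- Let Γ be a nonempty connected simple graph such that every internal set of Γ is a singleton (an internal vertex) and such that the set Int(Γ) of internal vertices is nonempty. Then every external vertex of Γ is adjacent to some internal vertex of Γ. -/
open SimpleGraph

/-- The link of a set `S` of vertices: all vertices adjacent to every vertex of `S`.
(For `S = ∅` this is all of `V`.) -/
def link {V : Type*} (G : SimpleGraph V) (S : Set V) : Set V :=
  {v : V | ∀ s ∈ S, G.Adj v s}

/-- A nonempty set of vertices is internal if its link is not a clique. -/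
def IsInternalSet {V : Type*} (G : SimpleGraph V) (S : Set V) : Prop :=
  S.Nonempty ∧ ¬ G.IsClique (link G S)

/-- A vertex is internal if its neighborhood is not a clique. -/
def IsInternalVertex {V : Type*} (G : SimpleGraph V) (v : V) : Prop :=
  ¬ G.IsClique (G.neighborSet v)

/-- The induced subgraph on the internal vertices. -/
def intGraph {V : Type*} (G : SimpleGraph V) :
    SimpleGraph ↥{v : V | IsInternalVertex G v} :=
  G.induce {v : V | IsInternalVertex G v}

/-- A graph is H-rigid if it is locally finite, all its internal sets are singletons,
and every nonempty finite set of vertices with nonempty link induces a subgraph all of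
whose connected components are complete. -/
def HRigid {V : Type*} (G : SimpleGraph V) : Prop :=
  (∀ v : V, (G.neighborSet v).Finite) ∧
  (∀ S : Set V, IsInternalSet G S → ∃ v : V, S = {v}) ∧
  (∀ S : Set V, S.Finite → S.Nonempty → (link G S).Nonempty →
    ∀ u w : ↥S, (G.induce S).Reachable u w → u = w ∨ (G.induce S).Adj u w)

/-- The eccentricity of a vertex: the sup of extended graph distances to all vertices. -/
noncomputable def eccentricity {V : Type*} (G : SimpleGraph V) (t : V) : ℕ∞ :=
  ⨆ s : V, G.edist t s

/-- The radius of a graph, valued in `ℕ∞`. -/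
noncomputable def graphRadius {V : Type*} (G : SimpleGraph V) : ℕ∞ :=
  ⨅ t : V, eccentricity G t

/-- The infinite line graph on `ℤ`: `i` and `j` adjacent iff `|i - j| = 1`. -/
def lineZ : SimpleGraph ℤ where
  Adj i j := |i - j| = 1
  symm := ⟨by intro i j h; rwa [abs_sub_comm]⟩
  loopless := ⟨by intro i h; simp at h⟩

/-- The cycle graph on `ZMod n`: `i` and `j` adjacent iff `i - j = 1` or `j - i = 1`. -/
def cycleZMod (n : ℕ) : SimpleGraph (ZMod n) :=
  SimpleGraph.circulantGraph ({1} : Set (ZMod n))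

/-! An external vertex `v` all of whose neighbours are external absorbs its whole component:
if `w` is a neighbour of `v`, then `v` and any other neighbour `u` of `w` lie in the clique
`N(w)`, so `u` is again `v` or a neighbour of `v`. In a connected graph this leaves no room for
an internal vertex, since it would have to be a neighbour of `v`. -/

namespace SimpleGraph

variable {V : Type*} {G : SimpleGraph V}

theorem adj_of_not_isInternalVertex {x u w : V} (hx : ¬ IsInternalVertex G x)
    (hu : G.Adj x u) (hw : G.Adj x w) (huw : u ≠ w) : G.Adj u w :=
  not_not.mp hx hu hw huw

theorem eq_or_adj_of_forall_adj_not_isInternalVertex {v : V} (hv : ¬ IsInternalVertex G v)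
    (hnbr : ∀ w, G.Adj v w → ¬ IsInternalVertex G w) {u : V} (p : G.Walk u v) :
    u = v ∨ G.Adj v u := by
  induction p with
  | nil => exact .inl rfl
  | @cons u w v huw _ ih =>
    obtain rfl | hvw := ih hv hnbr
    · exact .inr huw.symm
    · by_cases huv : u = v
      · exact .inl huv
      · exact .inr (adj_of_not_isInternalVertex (hnbr w hvw) hvw.symm huw.symm (Ne.symm huv))

end SimpleGraph

theorem stmt0_general {V : Type*} (G : SimpleGraph V) (hconn : G.Connected)
    (hne : ∃ v : V, IsInternalVertex G v) :
    ∀ v : V, ¬ IsInternalVertex G v →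
      ∃ w : V, IsInternalVertex G w ∧ G.Adj v w := by
  intro v hv
  by_contra! hnbr
  obtain ⟨u, hu⟩ := hne
  obtain rfl | hvu := eq_or_adj_of_forall_adj_not_isInternalVertex hv
    (fun w hvw hw => hnbr w hw hvw) (hconn u v).some
  · exact hv hu
  · exact hnbr u hu hvu

/-- In a nonempty connected graph all of whose internal sets are singletons
and which has at least one internal vertex, every external vertex is adjacent to some
internal vertex. -/
theorem stmt0 {V : Type*} (G : SimpleGraph V) (hconn : G.Connected)
    (hsing : ∀ S : Set V, IsInternalSet G S → ∃ v : V, S = {v})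
    (hne : ∃ v : V, IsInternalVertex G v) :
    ∀ v : V, ¬ IsInternalVertex G v →
      ∃ w : V, IsInternalVertex G w ∧ G.Adj v w :=
  stmt0_general G hconn hne
end

section
/- Let Γ be a nonempty connected simple graph such that every internal set of Γ is a singleton, and suppose the set Int(Γ) of internal vertices is nonempty. Then Radius(Γ) ≤ Radius(Int(Γ)) + 1, where Int(Γ) is the induced subgraph of Γ on the internal vertices and both radii are computed in ℕ∞. -/
open SimpleGraph

/-!
Every vertex is internal or adjacent to an internal vertex, by induction along a walk to an
internal vertex: if `s` is adjacent to `b`, and `b` is within distance one of an internal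
vertex `u` that is neither `s` nor adjacent to `s`, then `s` and `u` are non-adjacent
neighbours of `b`, so `b` is internal. Since distances between internal vertices can only
shrink when measured in `Γ` instead of `Int(Γ)`, a centre of `Int(Γ)` then has eccentricity
at most `Radius(Int(Γ)) + 1` in `Γ`.
-/

namespace SimpleGraph

variable {V W : Type*} {G : SimpleGraph V}

lemma graphRadius_eq_radius (G : SimpleGraph V) : graphRadius G = G.radius := rfl

lemma Hom.edist_le {G' : SimpleGraph W} (f : G →g G') (u v : V) :
    G'.edist (f u) (f v) ≤ G.edist u v := by
  by_cases h : G.Reachable u v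
  · obtain ⟨p, hp⟩ := h.exists_walk_length_eq_edist
    calc G'.edist (f u) (f v) ≤ (p.map f).length := (p.map f).edist_le
      _ = G.edist u v := by rw [Walk.length_map, hp]
  · simp [edist_eq_top_of_not_reachable h]

lemma isInternalVertex_of_adj_of_adj {v a b : V} (ha : G.Adj v a) (hb : G.Adj v b) (hab : a ≠ b)
    (hnadj : ¬ G.Adj a b) : IsInternalVertex G v :=
  fun hclique => hnadj (hclique ha hb hab)

lemma Walk.exists_isInternalVertex_edist_le_one {s w : V} (p : G.Walk s w)
    (hw : IsInternalVertex G w) : ∃ u, IsInternalVertex G u ∧ G.edist u s ≤ 1 := by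
  induction p with
  | nil => exact ⟨_, hw, by simp⟩
  | @cons s b w hsb _ ih =>
    obtain ⟨u, hu, hub⟩ := ih hw
    rcases edist_le_one_iff_adj_or_eq.1 hub with hub | rfl
    · by_cases hus : G.edist u s ≤ 1
      · exact ⟨u, hu, hus⟩
      rw [edist_le_one_iff_adj_or_eq, not_or] at hus
      refine ⟨b, isInternalVertex_of_adj_of_adj hsb.symm hub.symm (Ne.symm hus.2) ?_, ?_⟩
      · exact fun hsu => hus.1 hsu.symm
      · exact edist_le_one_iff_adj_or_eq.2 (.inl hsb.symm)
    · exact ⟨u, hu, edist_le_one_iff_adj_or_eq.2 (.inl hsb.symm)⟩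

lemma eccent_le_eccent_intGraph_add_one (hG : G.Preconnected)
    (t : {v : V | IsInternalVertex G v}) : G.eccent t ≤ (intGraph G).eccent t + 1 := by
  refine iSup_le fun s => ?_
  obtain ⟨u, hu, hus⟩ := (hG s t).some.exists_isInternalVertex_edist_le_one t.2
  calc G.edist t s ≤ G.edist t u + G.edist u s := G.edist_triangle
    _ ≤ (intGraph G).edist t ⟨u, hu⟩ + 1 :=
        add_le_add ((Embedding.induce _).toHom.edist_le t ⟨u, hu⟩) hus
    _ ≤ (intGraph G).eccent t + 1 := by gcongr; exact edist_le_eccent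

end SimpleGraph

theorem stmt1_general {V : Type*} (G : SimpleGraph V) (hconn : G.Connected)
    (hne : {v : V | IsInternalVertex G v}.Nonempty) :
    graphRadius G ≤ graphRadius (intGraph G) + 1 := by
  have : Nonempty {v : V | IsInternalVertex G v} := hne.to_subtype
  obtain ⟨t, ht⟩ := (intGraph G).exists_eccent_eq_radius
  rw [graphRadius_eq_radius, graphRadius_eq_radius, ← ht]
  exact radius_le_eccent.trans (eccent_le_eccent_intGraph_add_one hconn.preconnected t)

/-- For a nonempty connected graph all of whose internal sets are singletons,
with at least one internal vertex, `Radius(Γ) ≤ Radius(Int(Γ)) + 1`. -/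
theorem stmt1 {V : Type*} (G : SimpleGraph V) (hconn : G.Connected)
    (hsing : ∀ S : Set V, IsInternalSet G S → ∃ v : V, S = {v})
    (hne : {v : V | IsInternalVertex G v}.Nonempty) :
    graphRadius G ≤ graphRadius (intGraph G) + 1 :=
  stmt1_general G hconn hne
end
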